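/- Let $\pi$ and $\mu$ be overpartitions in $\overline{\mathcal{B}}(\alpha_1,\ldots,\alpha_\lambda;\eta,k,r)$ (i.e., satisfying conditions (1)-(4) of Definition of $\overline{B}_0$) such that $\pi$ is obtained from $\mu$ by inserting a non-overlined part $t\eta$ for some $t \geq 1$. Then there are no $(k-1)$-bands of $\mu$ belonging to the interval $[(t-1)\eta, (t+1)\eta]$. -/

import Mathlib

/-!
Condition (4) of `B̄` says exactly that `π` has no `k`-band. If `μ` had a `(k-1)`-band in
`[(t-1)η, (t+1)η]`, then in `π` this band together with the part just before it (if `tη`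
lands before the band), the part just after it (if `tη` lands after it) or `tη` itself (if
`tη` lands inside) would be `k` consecutive parts spanning at most `η`: a `k`-band of `π`.
The strict inequality demanded at an overlined first part comes for free, since overlined
parts have odd `OPart.val` while the bounds `2tη` and `2(t+1)η` are even.
-/

/-- A part of an overpartition: a size together with a flag telling
whether the part is overlined. -/
structure OPart where
  size : ℕ
  isOver : Bool
deriving DecidableEq

/-- The value of a part in the ordering `1̄ < 1 < 2̄ < 2 < ⋯`:
an overlined part of size `t` has value `2t - 1`, a non-overlined one `2t`. -/
def OPart.val (p : OPart) : ℕ := 2 * p.size - (if p.isOver then 1 else 0)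

def dpart : OPart := ⟨0, false⟩

/-- value of the `i`-th part (0-based). -/
def pval (π : List OPart) (i : ℕ) : ℕ := (π.getD i dpart).val

def pover (π : List OPart) (i : ℕ) : Bool := (π.getD i dpart).isOver

def psize (π : List OPart) (i : ℕ) : ℕ := (π.getD i dpart).size

/-- the weight `|π|`: the sum of the sizes of the parts. -/
def wt (π : List OPart) : ℕ := (π.map OPart.size).sum

/-- An overpartition: a sequence of positive parts, non-increasing in the
ordering `1̄ < 1 < 2̄ < 2 < ⋯`, in which each size is overlined at most once
(the overlined copy, being smallest among equal sizes, is the last occurrence). -/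
def IsOverPartition (π : List OPart) : Prop :=
  List.Pairwise (fun p q : OPart => q.val ≤ p.val) π ∧
  (∀ p ∈ π, 0 < p.size) ∧
  (∀ t : ℕ, π.count (⟨t, true⟩ : OPart) ≤ 1)

/-- `{π_{i+l}}_{0 ≤ l ≤ m-1}` is an `m`-band of `π`:
`π_i ≤ π_{i+m-1} + η`, with strict inequality if `π_i` is overlined. -/
def IsBand (η : ℕ) (π : List OPart) (m i : ℕ) : Prop :=
  i + m ≤ π.length ∧
  pval π i ≤ pval π (i + m - 1) + 2 * η ∧
  (pover π i = true → pval π i < pval π (i + m - 1) + 2 * η)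

/-- `V̄_π(N)`: the number of overlined parts of value at most `N`
whose size is not divisible by `η`. -/
def Vbar (η : ℕ) (π : List OPart) (N : ℕ) : ℕ :=
  π.countP (fun p => p.isOver && decide (p.val ≤ N) && !(decide (p.size % η = 0)))

/-- `Ō_π(N)`: the number of overlined parts of value at least `N`
whose size is divisible by `η`. -/
def Obar (η : ℕ) (π : List OPart) (N : ℕ) : ℕ :=
  π.countP (fun p => p.isOver && decide (N ≤ p.val) && decide (p.size % η = 0))

/-- `f_{≤η}(π)`: the number of parts not exceeding `η`. -/
def fLe (η : ℕ) (π : List OPart) : ℕ :=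
  π.countP (fun p => decide (p.val ≤ 2 * η))

/-- `[|π_i|/η] + ⋯ + [|π_{i+m-1}|/η]`. -/
def bandSum (η : ℕ) (π : List OPart) (i m : ℕ) : ℕ :=
  ∑ l ∈ Finset.range m, psize π (i + l) / η

/-- Every part is congruent to `0, α_1, …, α_λ` modulo `η`. -/
def CongParts (α : ℕ → ℕ) (lam η : ℕ) (π : List OPart) : Prop :=
  ∀ p ∈ π, p.size % η = 0 ∨ ∃ s, 1 ≤ s ∧ s ≤ lam ∧ p.size % η = α s

/-- The class `B̄(α_1,…,α_λ; η, k, r)`: conditions (1)–(4) of the definition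
of `B̄₀`. -/
def InBbar (α : ℕ → ℕ) (lam η k r : ℕ) (π : List OPart) : Prop :=
  IsOverPartition π ∧
  CongParts α lam η π ∧
  (∀ p ∈ π, p.isOver = false → η ∣ p.size) ∧
  (∀ i, i + k ≤ π.length →
    pval π (i + k - 1) + 2 * η ≤ pval π i ∧
    (pover π i = false → pval π (i + k - 1) + 2 * η < pval π i)) ∧
  fLe η π ≤ r

/-- An `m`-band at `i` is even:
`[|π_i|/η]+⋯+[|π_{i+m-1}|/η] ≡ r - 1 + V̄_π(π_i) + Ō_π(π_{i+m-1}) (mod 2)`. -/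
def EvenBand (η r : ℕ) (π : List OPart) (m i : ℕ) : Prop :=
  Int.ModEq 2 (bandSum η π i m)
    ((r : ℤ) - 1 + (Vbar η π (pval π i) : ℤ) + (Obar η π (pval π (i + m - 1)) : ℤ))

/-- Condition (5) of the definition of `B̄₀`. -/
def Cond5 (η k r : ℕ) (π : List OPart) : Prop :=
  fLe η π = r → (⟨η, true⟩ : OPart) ∉ π →
    ∃ i, IsBand η π (k - 1) i ∧ pval π i < 2 * (2 * η) - 1

/-- The class `B̄₀(α_1,…,α_λ; η, k, r)`: conditions (1)–(6). -/
def InB0 (α : ℕ → ℕ) (lam η k r : ℕ) (π : List OPart) : Prop :=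
  InBbar α lam η k r π ∧ Cond5 η k r π ∧
  ∀ i, IsBand η π (k - 1) i → EvenBand η r π (k - 1) i

/-- `s(π) > t̄η`: every overlined part divisible by `η` has size `> tη`. -/
def SGt (η t : ℕ) (π : List OPart) : Prop :=
  ∀ p ∈ π, p.isOver = true → η ∣ p.size → t * η < p.size

/-- `s(π) = t̄η`. -/
def SEq (η t : ℕ) (π : List OPart) : Prop :=
  (⟨t * η, true⟩ : OPart) ∈ π ∧
  ∀ p ∈ π, p.isOver = true → η ∣ p.size → t * η ≤ p.size

/-- `g(π) ≥ x` (value `x`): every part starting a `(k-1)`-band has value `≥ x`. -/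
def GGe (η k : ℕ) (π : List OPart) (x : ℕ) : Prop :=
  ∀ i, IsBand η π (k - 1) i → x ≤ pval π i

/-- `g(π) < x`: some part starting a `(k-1)`-band has value `< x`. -/
def GLt (η k : ℕ) (π : List OPart) (x : ℕ) : Prop :=
  ∃ i, IsBand η π (k - 1) i ∧ pval π i < x

/-- `π ∈ B̄₀^=(α_1,…,α_λ; η,k,r | t)`. -/
def InBeq (α : ℕ → ℕ) (lam η k r t : ℕ) (π : List OPart) : Prop :=
  InB0 α lam η k r π ∧
  ((SEq η t π ∧ GGe η k π (2 * (t * η) - 1)) ∨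
   (SGt η t π ∧ GGe η k π (2 * (t * η)) ∧ GLt η k π (2 * ((t + 1) * η) - 1)))

/-- `π ∈ B̄₀^>(α_1,…,α_λ; η,k,r | t)`. -/
def InBgt (α : ℕ → ℕ) (lam η k r t : ℕ) (π : List OPart) : Prop :=
  InB0 α lam η k r π ∧ SGt η t π ∧ GGe η k π (2 * ((t + 1) * η) - 1)

/-- An `m`-band belonging to the closed interval `[(t-1)η, (t+1)η]`. -/
def BandInC (η t : ℕ) (π : List OPart) (m i : ℕ) : Prop :=
  IsBand η π m i ∧ 2 * ((t - 1) * η) ≤ pval π (i + m - 1) ∧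
  pval π i ≤ 2 * ((t + 1) * η)

/-- An `m`-band belonging to `[(t-1)η, \overline{(t+1)η})`. -/
def BandInO (η t : ℕ) (π : List OPart) (m i : ℕ) : Prop :=
  IsBand η π m i ∧ 2 * ((t - 1) * η) ≤ pval π (i + m - 1) ∧
  pval π i < 2 * ((t + 1) * η) - 1

/-- An `m`-band at `i` is of type N. -/
def TypeN (η r t : ℕ) (π : List OPart) (m i : ℕ) : Prop :=
  Int.ModEq 2 (bandSum η π i m)
    ((t : ℤ) + (r : ℤ) - 1 + (Vbar η π (pval π i) : ℤ) +
      (Obar η π (pval π (i + m - 1)) : ℤ))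

/-- `π` is obtained from `μ` by inserting the part `p`. -/
def InsertPart (μ : List OPart) (p : OPart) (π : List OPart) : Prop :=
  ∃ l1 l2, μ = l1 ++ l2 ∧ π = l1 ++ p :: l2

/-- The `(k-1)`-reduction `D_t` as a relation: `μ = D_t(π)`. -/
def DtRel (η t : ℕ) (π μ : List OPart) : Prop :=
  ((⟨t * η, true⟩ : OPart) ∈ π ∧ InsertPart μ ⟨t * η, true⟩ π) ∨
  ((⟨t * η, true⟩ : OPart) ∉ π ∧ InsertPart μ ⟨t * η, false⟩ π)

/-- `μ` has a `(k-2)`-band belonging to `[(t-1)η, \overline{(t+1)η})` of type N. -/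
def HasTypeNBand (η r k t : ℕ) (μ : List OPart) : Prop :=
  ∃ i, BandInO η t μ (k - 2) i ∧ TypeN η r t μ (k - 2) i

/-- The `(k-1)`-augmentation `C_t` as a relation: `π = C_t(μ)`. -/
def CtRel (η r k t : ℕ) (μ π : List OPart) : Prop :=
  (HasTypeNBand η r k t μ ∧ InsertPart μ ⟨t * η, false⟩ π) ∨
  (¬ HasTypeNBand η r k t μ ∧ InsertPart μ ⟨t * η, true⟩ π)

/-- `B₁`-type overpartitions: conditions (1)–(4), no overlined part divisible
by `η`, and at most `r - 1` parts not exceeding `η`. -/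
def InB1over (α : ℕ → ℕ) (lam η k r : ℕ) (π : List OPart) : Prop :=
  InBbar α lam η k r π ∧ (∀ p ∈ π, p.isOver = true → ¬ η ∣ p.size) ∧ fLe η π < r

/-- `D_η`: partitions into distinct parts divisible by `η`. -/
def InD (η : ℕ) (τ : List ℕ) : Prop :=
  List.Pairwise (· > ·) τ ∧ ∀ x ∈ τ, 0 < x ∧ η ∣ x

/-- Bressoud's class `B₁(α_1,…,α_λ; η,k,r)` of ordinary partitions. -/
def InB1nat (α : ℕ → ℕ) (lam η k r : ℕ) (σ : List ℕ) : Prop :=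
  List.Pairwise (· ≥ ·) σ ∧ (∀ x ∈ σ, 0 < x) ∧
  (∀ x ∈ σ, x % η = 0 ∨ ∃ s, 1 ≤ s ∧ s ≤ lam ∧ x % η = α s) ∧
  (∀ x : ℕ, ¬ η ∣ x → σ.count x ≤ 1) ∧
  (∀ i, i + k ≤ σ.length →
    σ.getD (i + k - 1) 0 + η ≤ σ.getD i 0 ∧
    (η ∣ σ.getD i 0 → σ.getD (i + k - 1) 0 + η < σ.getD i 0)) ∧
  σ.countP (fun x => decide (x ≤ η)) < r

/-- The class `Ā₀(α_1,…,α_λ; η,k,r)`. Congruence conditions involving `η/2`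
are stated with sizes doubled. -/
def InA0 (α : ℕ → ℕ) (lam η k r : ℕ) (π : List OPart) : Prop :=
  IsOverPartition π ∧
  CongParts α lam η π ∧
  (Even lam →
    ∀ p ∈ π, p.isOver = false →
      η ∣ p.size ∧
      ¬ (2 * η * (2 * k - lam - 1) ∣ 2 * p.size) ∧
      2 * p.size % (2 * η * (2 * k - lam - 1)) ≠ η * (2 * r - lam) ∧
      2 * p.size % (2 * η * (2 * k - lam - 1)) ≠
        2 * η * (2 * k - lam - 1) - η * (2 * r - lam)) ∧
  (¬ Even lam →
    (∀ p ∈ π, p.isOver = false →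
      η ∣ 2 * p.size ∧
      p.size % (2 * η) ≠ η ∧
      ¬ (2 * η * (2 * k - lam - 1) ∣ 2 * p.size) ∧
      2 * p.size % (2 * η * (2 * k - lam - 1)) ≠ η * (2 * r - lam) ∧
      2 * p.size % (2 * η * (2 * k - lam - 1)) ≠
        2 * η * (2 * k - lam - 1) - η * (2 * r - lam)) ∧
    (∀ p ∈ π, p.isOver = true → 2 * p.size % (2 * η) ≠ η))

section Insertion

variable {α : Type*} {l₁ l₂ : List α} {p d : α}

theorem List.getD_append_cons_of_lt {j : ℕ} (hj : j < l₁.length) :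
    (l₁ ++ p :: l₂).getD j d = (l₁ ++ l₂).getD j d := by
  rw [List.getD_append _ _ _ _ hj, List.getD_append _ _ _ _ hj]

theorem List.getD_append_cons_length : (l₁ ++ p :: l₂).getD l₁.length d = p := by
  simp

theorem List.getD_append_cons_succ_of_le {j : ℕ} (hj : l₁.length ≤ j) :
    (l₁ ++ p :: l₂).getD (j + 1) d = (l₁ ++ l₂).getD j d := by
  rw [List.getD_append_right _ _ _ _ (by omega), List.getD_append_right _ _ _ _ hj,
    show j + 1 - l₁.length = j - l₁.length + 1 by omega, List.getD_cons_succ]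

end Insertion

theorem OPart.val_lt_of_isOver {p : OPart} {n : ℕ} (hn : 0 < n) (hp : p.isOver = true)
    (h : p.val ≤ 2 * n) : p.val < 2 * n := by
  obtain ⟨s, _⟩ := p
  cases hp
  simp only [OPart.val, if_true] at h ⊢
  omega

theorem pval_antitone {π : List OPart} (h : π.Pairwise (fun p q : OPart => q.val ≤ p.val))
    {i j : ℕ} (hij : i ≤ j) (hj : j < π.length) : pval π j ≤ pval π i := by
  rcases hij.eq_or_lt with rfl | hlt
  · exact le_rfl
  · simp only [pval, List.getD_eq_getElem _ _ (hlt.trans hj), List.getD_eq_getElem _ _ hj]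
    exact List.pairwise_iff_getElem.mp h i j (hlt.trans hj) hj hlt

theorem InBbar.not_isBand {α : ℕ → ℕ} {lam η k r : ℕ} {π : List OPart}
    (h : InBbar α lam η k r π) (i : ℕ) : ¬ IsBand η π k i := by
  rintro ⟨hlen, hle, hlt⟩
  obtain ⟨hge, hgt⟩ := h.2.2.2.1 i hlen
  cases hov : pover π i
  · exact absurd (hgt hov) (by omega)
  · exact absurd (hlt hov) (by omega)

theorem BandInC.isBand_of_insertPart {η t m i : ℕ} {μ π : List OPart}
    (hband : BandInC η t μ (m + 1) i) (hη : 0 < η) (ht : 1 ≤ t)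
    (hsorted : π.Pairwise (fun p q : OPart => q.val ≤ p.val))
    (hins : InsertPart μ ⟨t * η, false⟩ π) :
    IsBand η π (m + 2) i := by
  obtain ⟨⟨hlen, hle, hlt⟩, hlo, hhi⟩ := hband
  obtain ⟨l₁, l₂, rfl, rfl⟩ := hins
  obtain ⟨s, rfl⟩ : ∃ s, t = s + 1 := ⟨t - 1, by omega⟩
  set p : OPart := ⟨(s + 1) * η, false⟩
  have hpos : 0 < (s + 1) * η := Nat.mul_pos s.succ_pos hη
  have hexp : (s + 1 + 1) * η = (s + 1) * η + η := by ring
  have hexp' : (s + 1) * η = s * η + η := by ring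
  simp only [Nat.add_sub_cancel, show i + (m + 1) - 1 = i + m by omega] at hle hlt hlo hhi
  have hlen' : (l₁ ++ p :: l₂).length = (l₁ ++ l₂).length + 1 := by
    simp only [List.length_append, List.length_cons]; omega
  have hl₁ : l₁.length ≤ (l₁ ++ l₂).length := by simp
  have hp : pval (l₁ ++ p :: l₂) l₁.length = 2 * ((s + 1) * η) := by
    simp only [pval, List.getD_append_cons_length, p, OPart.val, Bool.false_eq_true, if_false,
      Nat.sub_zero]
  refine ⟨by omega, ?_⟩
  simp only [show i + (m + 2) - 1 = i + m + 1 by omega]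
  have hfirst (hi : i < l₁.length) : pval (l₁ ++ p :: l₂) i = pval (l₁ ++ l₂) i ∧
      pover (l₁ ++ p :: l₂) i = pover (l₁ ++ l₂) i := by
    simp only [pval, pover, List.getD_append_cons_of_lt hi, and_self]
  rcases le_or_gt (i + m + 1) l₁.length with hend | hinside
  · obtain ⟨ha, hov⟩ := hfirst (by omega)
    have hb : 2 * ((s + 1) * η) ≤ pval (l₁ ++ p :: l₂) (i + m + 1) :=
      hp ▸ pval_antitone hsorted hend (by omega)
    rw [ha, hov]
    refine ⟨by omega, fun hov => ?_⟩
    have : pval (l₁ ++ l₂) i < 2 * ((s + 1 + 1) * η) :=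
      OPart.val_lt_of_isOver (by positivity) hov hhi
    omega
  have hb : pval (l₁ ++ p :: l₂) (i + m + 1) = pval (l₁ ++ l₂) (i + m) := by
    simp only [pval, List.getD_append_cons_succ_of_le (show l₁.length ≤ i + m by omega)]
  rcases le_or_gt l₁.length i with hbefore | hafter
  · have ha : pval (l₁ ++ p :: l₂) i ≤ 2 * ((s + 1) * η) :=
      hp ▸ pval_antitone hsorted hbefore (by omega)
    refine ⟨by omega, fun hov => ?_⟩
    have : pval (l₁ ++ p :: l₂) i < 2 * ((s + 1) * η) := OPart.val_lt_of_isOver hpos hov ha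
    omega
  · obtain ⟨ha, hov⟩ := hfirst hafter
    rw [ha, hov]
    exact ⟨by omega, fun hov => by have := hlt hov; omega⟩

theorem stmt_1_general (α : ℕ → ℕ) (lam η k r : ℕ)
    (hη : 0 < η)
    (hlk : lam + 1 < k)
    (t : ℕ) (ht : 1 ≤ t) (π μ : List OPart)
    (hπ : InBbar α lam η k r π)
    (hins : InsertPart μ ⟨t * η, false⟩ π) :
    ∀ i, ¬ BandInC η t μ (k - 1) i := by
  intro i hband
  obtain ⟨m, rfl⟩ : ∃ m, k = m + 2 := ⟨k - 2, by omega⟩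
  exact hπ.not_isBand i (hband.isBand_of_insertPart hη ht hπ.1.1 hins)

theorem stmt_1 (α : ℕ → ℕ) (lam η k r : ℕ)
    (hη : 0 < η)
    (hαpos : ∀ i, 1 ≤ i → i ≤ lam → 0 < α i ∧ α i < η)
    (hαmono : ∀ i j, 1 ≤ i → i < j → j ≤ lam → α i < α j)
    (hαsym : ∀ i, 1 ≤ i → i ≤ lam → α i = η - α (lam + 1 - i))
    (hrk : r < k) (hlr : lam ≤ r) (hlk : lam + 1 < k)
    (t : ℕ) (ht : 1 ≤ t) (π μ : List OPart)
    (hπ : InBbar α lam η k r π) (hμ : InBbar α lam η k r μ)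
    (hins : InsertPart μ ⟨t * η, false⟩ π) :
    ∀ i, ¬ BandInC η t μ (k - 1) i :=
  stmt_1_general α lam η k r hη hlk t ht π μ hπ hins
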